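/- Let D ⊆ Δ⁺ be a basic subset with diagram as defined and C(D) = {ξ_1 ≻ … ≻ ξ_c}. Let ξ_i ∈ C(D) with col(ξ_i) = t, and let γ ∈ Δ⁺ with col(γ) ≥ t. Then, after step i of the diagram construction, the place γ is unmarked or marked '•' if and only if w_i(γ) > 0; equivalently, after step i, the place γ is marked with one of '⊗', '+', '−' if and only if w_i(γ) < 0. -/

import Mathlib

/-- A positive root `(i,j)`: `n ≥ i > j ≥ 1`. -/
def IsPosRoot (n : ℕ) (γ : ℕ × ℕ) : Prop := 1 ≤ γ.2 ∧ γ.2 < γ.1 ∧ γ.1 ≤ n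

/-- `γ` is the sum of the roots `α` and `β` (in either order):
`(i,j) + (j,k) = (i,k)`. -/
def RootSum (α β γ : ℕ × ℕ) : Prop :=
  (α.2 = β.1 ∧ γ = (α.1, β.2)) ∨ (β.2 = α.1 ∧ γ = (β.1, α.2))

/-- A basic subset: a set of positive roots with at most one root in each
row and at most one root in each column. -/
def IsBasic (n : ℕ) (D : Set (ℕ × ℕ)) : Prop :=
  (∀ γ ∈ D, IsPosRoot n γ) ∧
  (∀ α ∈ D, ∀ β ∈ D, α.1 = β.1 → α = β) ∧
  (∀ α ∈ D, ∀ β ∈ D, α.2 = β.2 → α = β)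

/-- A positive root `α` is `D`-singular if `α + β ∈ D` for some positive root `β`. -/
def IsSingular (n : ℕ) (D : Set (ℕ × ℕ)) (α : ℕ × ℕ) : Prop :=
  IsPosRoot n α ∧ ∃ β γ, IsPosRoot n β ∧ RootSum α β γ ∧ γ ∈ D

/-- `M(D) = R(D) \ D`, where `R(D)` is the set of `D`-regular positive roots. -/
def MD (n : ℕ) (D : Set (ℕ × ℕ)) : Set (ℕ × ℕ) :=
  {γ | IsPosRoot n γ ∧ ¬ IsSingular n D γ ∧ γ ∉ D}
open scoped Classical

/-- Marks used in the diagram of a basic subset. -/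
inductive Mark : Type
  | otimes : Mark
  | plus : Mark
  | minus : Mark
  | bullet : Mark
deriving DecidableEq

/-- A marking state of the diagram: a partial assignment of marks to places. -/
abbrev MState : Type := ℕ × ℕ → Option Mark

/-- Step 0 of the diagram construction: every root of `M(D)` is marked `•`. -/
noncomputable def initMark (n : ℕ) (D : Set (ℕ × ℕ)) : MState :=
  fun γ => if γ ∈ MD n D then some Mark.bullet else none

/-- One step of the diagram construction: mark `ξ` with `⊗`, and for every
decomposition `ξ = α + β` with `col α = col ξ`, `row β = row ξ` and both
`α`, `β` unmarked, mark `α` with `+` and `β` with `−`. -/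
noncomputable def markStep (s : MState) (ξ : ℕ × ℕ) : MState :=
  fun γ =>
    if γ = ξ then some Mark.otimes
    else if γ.2 = ξ.2 ∧ ξ.2 < γ.1 ∧ γ.1 < ξ.1 ∧ s γ = none ∧ s (ξ.1, γ.1) = none then
      some Mark.plus
    else if γ.1 = ξ.1 ∧ ξ.2 < γ.2 ∧ γ.2 < ξ.1 ∧ s γ = none ∧ s (γ.2, ξ.2) = none then
      some Mark.minus
    else s γ

/-- The list of all positive roots in decreasing order with respect to `≻`
(`(k,m) ≻ (i,j)` iff `m < j`, or `m = j` and `k > i`). -/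
def rootList (n : ℕ) : List (ℕ × ℕ) :=
  (List.range n).flatMap (fun j0 =>
    (List.range n).filterMap (fun k =>
      if j0 + 1 < n - k then some (n - k, j0 + 1) else none))

/-- Run the diagram construction along a list of places, recording at each
step `i` the pair (`ξ_i`, state after step `i`). -/
noncomputable def diagRun (s : MState) : List (ℕ × ℕ) → List ((ℕ × ℕ) × MState)
  | [] => []
  | ξ :: rest =>
    if s ξ = none then (ξ, markStep s ξ) :: diagRun (markStep s ξ) rest
    else diagRun s rest

/-- The full run of the diagram construction for a basic subset `D`. -/
noncomputable def diagSeq (n : ℕ) (D : Set (ℕ × ℕ)) : List ((ℕ × ℕ) × MState) :=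
  diagRun (initMark n D) (rootList n)

/-- `c`, the number of steps (= number of `⊗` marks) of the diagram. -/
noncomputable def numSteps (n : ℕ) (D : Set (ℕ × ℕ)) : ℕ := (diagSeq n D).length

/-- `ξ_i`, the root marked `⊗` at step `i` (for `1 ≤ i ≤ c`). -/
noncomputable def xiRoot (n : ℕ) (D : Set (ℕ × ℕ)) (i : ℕ) : ℕ × ℕ :=
  (((diagSeq n D).getD (i - 1) ((0, 0), initMark n D))).1

/-- The state of the diagram after step `i` (for `0 ≤ i ≤ c`); the state
"before step `i`" is `stateAfter n D (i-1)`. -/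
noncomputable def stateAfter (n : ℕ) (D : Set (ℕ × ℕ)) : ℕ → MState
  | 0 => initMark n D
  | i + 1 => (((diagSeq n D).getD i ((0, 0), initMark n D))).2

/-- `C(D)`: the set of roots marked `⊗` on the diagram. -/
noncomputable def CD (n : ℕ) (D : Set (ℕ × ℕ)) : Set (ℕ × ℕ) :=
  {γ | γ ∈ (diagSeq n D).map Prod.fst}

/-- `A_γ`: the set of roots of `C(D)` in the same row as `γ`, strictly to the
left of `γ`. -/
noncomputable def AD (n : ℕ) (D : Set (ℕ × ℕ)) (γ : ℕ × ℕ) : Set (ℕ × ℕ) :=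
  {γ' | γ' ∈ CD n D ∧ γ'.1 = γ.1 ∧ γ'.2 < γ.2}
/-- `w_i = r_{ξ_1} ∘ ⋯ ∘ r_{ξ_i}` as a permutation of `ℕ` (each reflection
`r_{(a,b)}` being the transposition of `a` and `b`). -/
noncomputable def wStep (n : ℕ) (D : Set (ℕ × ℕ)) (i : ℕ) : Equiv.Perm ℕ :=
  (List.range i).foldl
    (fun w k => w * Equiv.swap (xiRoot n D (k + 1)).1 (xiRoot n D (k + 1)).2) 1

/-- `w(γ) > 0`: the image of the root `γ` under `w` is a positive root. -/
def PosUnder (w : Equiv.Perm ℕ) (γ : ℕ × ℕ) : Prop := w γ.2 < w γ.1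

/-- The linear order `≻` on positive roots: `(k,m) ≻ (i,j)` iff `m < j`, or
`m = j` and `k > i`.  `SuccG a b` means `a ≻ b`. -/
def SuccG (a b : ℕ × ℕ) : Prop := a.2 < b.2 ∨ (a.2 = b.2 ∧ b.1 < a.1)

section Stmt10Aux

open List

/-! ### Basic facts about `SuccG` and `rootList` -/

lemma succG_col {p r : ℕ × ℕ} (h : SuccG p r) : p.2 ≤ r.2 := by
  rcases h with h | ⟨h, _⟩ <;> omega

lemma mem_rootList {n : ℕ} {γ : ℕ × ℕ} : γ ∈ rootList n ↔ IsPosRoot n γ := by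
  obtain ⟨x, y⟩ := γ
  simp only [rootList, List.mem_flatMap, List.mem_filterMap, List.mem_range, IsPosRoot]
  constructor
  · rintro ⟨j0, hj0, k, hk, hif⟩
    split at hif
    · rename_i hlt
      rw [Option.some_inj, Prod.mk.injEq] at hif
      obtain ⟨h4, h5⟩ := hif
      refine ⟨by omega, by omega, by omega⟩
    · exact absurd hif (by simp)
  · rintro ⟨h1, h2, h3⟩
    refine ⟨y - 1, by omega, n - x, by omega, ?_⟩
    rw [if_pos (by omega), Option.some_inj, Prod.mk.injEq]
    omega

lemma pairwise_rootList (n : ℕ) : (rootList n).Pairwise SuccG := by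
  rw [rootList, List.pairwise_flatMap]
  constructor
  · intro j0 _
    rw [List.pairwise_filterMap]
    refine (@List.pairwise_lt_range n).imp ?_
    intro k k' hkk b hb b' hb'
    split at hb
    · rename_i h1
      split at hb'
      · rename_i h2
        simp only [Option.mem_def, Option.some_inj] at hb hb'
        subst hb hb'
        exact Or.inr ⟨rfl, by omega⟩
      · simp at hb'
    · simp at hb
  · refine (@List.pairwise_lt_range n).imp ?_
    intro j0 j0' hj b hb b' hb'
    simp only [List.mem_filterMap, List.mem_range] at hb hb'
    obtain ⟨k, _, hk⟩ := hb
    obtain ⟨k', _, hk'⟩ := hb'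
    split at hk
    · split at hk'
      · rw [Option.some_inj] at hk hk'
        subst hk hk'
        exact Or.inl (by simp; omega)
      · simp at hk'
    · simp at hk

/-! ### Scanning machinery -/

noncomputable def proc (s : MState) (q : ℕ × ℕ) : MState :=
  if s q = none then markStep s q else s

noncomputable def procList (s : MState) (L : List (ℕ × ℕ)) : MState := L.foldl proc s

noncomputable def permOf (X : List (ℕ × ℕ)) : Equiv.Perm ℕ :=
  X.foldl (fun w ξ => w * Equiv.swap ξ.1 ξ.2) 1

def colLast (P : List (ℕ × ℕ)) : ℕ := (P.getLast?.map Prod.snd).getD 1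

lemma procList_append (s : MState) (L1 L2 : List (ℕ × ℕ)) :
    procList s (L1 ++ L2) = procList (procList s L1) L2 :=
  List.foldl_append ..

lemma permOf_append (X : List (ℕ × ℕ)) (q : ℕ × ℕ) :
    permOf (X ++ [q]) = permOf X * Equiv.swap q.1 q.2 := by
  simp [permOf, List.foldl_append]

lemma diagRun_append (s : MState) (L1 L2 : List (ℕ × ℕ)) :
    diagRun s (L1 ++ L2) = diagRun s L1 ++ diagRun (procList s L1) L2 := by
  induction L1 generalizing s with
  | nil => rfl
  | cons q L1 ih =>
    rw [List.cons_append]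
    by_cases h : s q = none
    · rw [diagRun, if_pos h, diagRun, if_pos h, List.cons_append, ih]
      have : procList s (q :: L1) = procList (markStep s q) L1 := by
        simp [procList, proc, if_pos h]
      rw [this]
    · rw [diagRun, if_neg h, diagRun, if_neg h, ih]
      have : procList s (q :: L1) = procList s L1 := by
        simp [procList, proc, if_neg h]
      rw [this]

/-! ### markStep helper lemmas -/

lemma markStep_self (s : MState) (ξ : ℕ × ℕ) : markStep s ξ ξ = some Mark.otimes := by
  simp [markStep]

lemma markStep_none_imp {s : MState} {ξ γ : ℕ × ℕ} (h : markStep s ξ γ = none) :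
    s γ = none := by
  unfold markStep at h
  split_ifs at h
  exact h

lemma markStep_of_marked {s : MState} {ξ γ : ℕ × ℕ} (hne : γ ≠ ξ) (h : s γ ≠ none) :
    markStep s ξ γ = s γ := by
  unfold markStep
  rw [if_neg hne, if_neg (by tauto), if_neg (by tauto)]

lemma markStep_other {s : MState} {ξ γ : ℕ × ℕ} (hne : γ ≠ ξ)
    (h1 : ¬(γ.2 = ξ.2 ∧ ξ.2 < γ.1 ∧ γ.1 < ξ.1))
    (h2 : ¬(γ.1 = ξ.1 ∧ ξ.2 < γ.2 ∧ γ.2 < ξ.1)) :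
    markStep s ξ γ = s γ := by
  unfold markStep
  rw [if_neg hne, if_neg (by tauto), if_neg (by tauto)]

lemma markStep_col {s : MState} {ξ : ℕ × ℕ} {m : ℕ} (h1 : ξ.2 < m) (h2 : m < ξ.1) :
    markStep s ξ (m, ξ.2) =
      if s (m, ξ.2) = none ∧ s (ξ.1, m) = none then some Mark.plus else s (m, ξ.2) := by
  have hne : (m, ξ.2) ≠ ξ := by
    intro h; rw [Prod.ext_iff] at h; omega
  unfold markStep
  rw [if_neg hne]
  by_cases hc : s (m, ξ.2) = none ∧ s (ξ.1, m) = none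
  · rw [if_pos ⟨rfl, h1, h2, hc.1, hc.2⟩, if_pos hc]
  · rw [if_neg (by tauto), if_neg (by intro h; exact absurd h.1 (by omega)), if_neg hc]

lemma markStep_row {s : MState} {ξ : ℕ × ℕ} {m : ℕ} (h1 : ξ.2 < m) (h2 : m < ξ.1) :
    markStep s ξ (ξ.1, m) =
      if s (ξ.1, m) = none ∧ s (m, ξ.2) = none then some Mark.minus else s (ξ.1, m) := by
  have hne : (ξ.1, m) ≠ ξ := by
    intro h; rw [Prod.ext_iff] at h; omega
  unfold markStep
  rw [if_neg hne, if_neg (by intro h; exact absurd h.1 (by omega))]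
  by_cases hc : s (ξ.1, m) = none ∧ s (m, ξ.2) = none
  · rw [if_pos ⟨rfl, h1, h2, hc.1, hc.2⟩, if_pos hc]
  · rw [if_neg (by tauto), if_neg hc]

lemma markStep_cases (s : MState) (ξ γ : ℕ × ℕ) :
    markStep s ξ γ = s γ ∨ γ = ξ ∨
    (γ.2 = ξ.2 ∧ ξ.2 < γ.1 ∧ γ.1 < ξ.1 ∧ s γ = none ∧ s (ξ.1, γ.1) = none ∧
      markStep s ξ γ = some Mark.plus) ∨
    (γ.1 = ξ.1 ∧ ξ.2 < γ.2 ∧ γ.2 < ξ.1 ∧ s γ = none ∧ s (γ.2, ξ.2) = none ∧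
      markStep s ξ γ = some Mark.minus) := by
  unfold markStep
  split_ifs with h1 h2 h3
  · exact Or.inr (Or.inl h1)
  · exact Or.inr (Or.inr (Or.inl ⟨h2.1, h2.2.1, h2.2.2.1, h2.2.2.2.1, h2.2.2.2.2, rfl⟩))
  · exact Or.inr (Or.inr (Or.inr ⟨h3.1, h3.2.1, h3.2.2.1, h3.2.2.2.1, h3.2.2.2.2, rfl⟩))
  · exact Or.inl rfl

lemma perm_lt_of_not_lt (w : Equiv.Perm ℕ) {x y : ℕ} (hxy : x ≠ y) (h : ¬ w x < w y) :
    w y < w x := by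
  have := (Equiv.injective w).ne hxy
  omega

/-! ### The master invariant -/

structure ScanInv (n : ℕ) (D : Set (ℕ × ℕ)) (s : MState) (X : List (ℕ × ℕ)) (lo : ℕ)
    (Q : List (ℕ × ℕ)) : Prop where
  i1 : ∀ γ, IsPosRoot n γ → γ ∉ Q → s γ ≠ none
  i2 : ∀ γ, s γ = some Mark.bullet ↔ γ ∈ MD n D
  i3 : ∀ γ : ℕ × ℕ, IsPosRoot n γ → lo ≤ γ.2 →
      ((s γ = none ∨ s γ = some Mark.bullet) ↔ permOf X γ.2 < permOf X γ.1)
  i4 : ∀ x, lo < x → (∀ ξ ∈ X, ξ.1 ≠ x) → permOf X x = x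
  i5 : ∀ x, lo < x → ∀ ξ ∈ X, ξ.1 = x → permOf X x ≤ lo
  i6 : permOf X lo ≤ lo ∨ ∀ r ∈ Q, r.2 = lo → s r ≠ none
  i7 : ∀ γ : ℕ × ℕ, s γ = some Mark.minus → ∃ ξ ∈ X, ξ.1 = γ.1 ∧ ξ.2 < γ.2
  i8 : ∀ γ : ℕ × ℕ, s γ = some Mark.plus → ∃ ξ ∈ X, ξ.2 = γ.2 ∧ γ.1 < ξ.1
  i9 : ∀ γ, s γ = some Mark.otimes ↔ γ ∈ X
  i10 : ∀ γ ∈ D, s γ = none ∨ s γ = some Mark.otimes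
  i11 : ∀ ξ ∈ X, ∃ d, (ξ.1, d) ∈ D ∧ d ≤ ξ.2
  i12 : ∀ b c, (b, c) ∈ D → s (b, c) = some Mark.otimes →
      ∀ m, c < m → m < b → s (m, c) ≠ none
  i13 : ∀ ξ ∈ X, ξ.2 ≤ lo

/-- Characterization of membership in `MD`. -/
lemma mem_MD_iff {n : ℕ} {D : Set (ℕ × ℕ)} (hD : IsBasic n D) {γ : ℕ × ℕ} :
    γ ∈ MD n D ↔ IsPosRoot n γ ∧ (∀ k, k < γ.2 → (γ.1, k) ∉ D) ∧
      (∀ b, γ.1 < b → (b, γ.2) ∉ D) ∧ γ ∉ D := by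
  obtain ⟨x, y⟩ := γ
  constructor
  · rintro ⟨hpos, hsing, hD'⟩
    refine ⟨hpos, ?_, ?_, hD'⟩
    · intro k hk hkD
      refine hsing ⟨hpos, (y, k), (x, k), ?_, Or.inl ⟨rfl, rfl⟩, hkD⟩
      have := hD.1 _ hkD
      exact ⟨this.1, hk, by obtain ⟨h1, h2, h3⟩ := hpos; omega⟩
    · intro b hb hbD
      refine hsing ⟨hpos, (b, x), (b, y), ?_, Or.inr ⟨rfl, rfl⟩, hbD⟩
      have := hD.1 _ hbD
      exact ⟨by obtain ⟨h1, h2, h3⟩ := hpos; omega, hb, this.2.2⟩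
  · rintro ⟨hpos, hrow, hcol, hD'⟩
    refine ⟨hpos, ?_, hD'⟩
    rintro ⟨-, β, γ', hβ, hsum, hγ'D⟩
    rcases hsum with ⟨h1, h2⟩ | ⟨h1, h2⟩
    · subst h2
      exact hrow β.2 (h1 ▸ hβ.2.1) hγ'D
    · subst h2
      exact hcol β.1 (h1 ▸ hβ.2.1) hγ'D

/-- The base case of the invariant. -/
lemma invBase (n : ℕ) (D : Set (ℕ × ℕ)) :
    ScanInv n D (initMark n D) [] 1 (rootList n) := by
  have hperm : permOf [] = 1 := rfl
  have hinit : ∀ γ, initMark n D γ = none ∨ initMark n D γ = some Mark.bullet := by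
    intro γ
    unfold initMark
    split_ifs <;> simp
  constructor
  · intro γ hγ hmem
    exact absurd (mem_rootList.mpr hγ) hmem
  · intro γ
    unfold initMark
    split_ifs with h <;> simp [h]
  · intro γ hγ _
    simp only [hperm, Equiv.Perm.one_apply]
    exact iff_of_true (hinit γ) hγ.2.1
  · intro x _ _; simp [hperm]
  · intro x _ ξ hξ; simp at hξ
  · exact Or.inl (by simp [hperm])
  · intro γ h
    rcases hinit γ with h' | h' <;> rw [h'] at h <;> simp at h
  · intro γ h
    rcases hinit γ with h' | h' <;> rw [h'] at h <;> simp at h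
  · intro γ
    constructor
    · intro h
      rcases hinit γ with h' | h' <;> rw [h'] at h <;> simp at h
    · intro h; simp at h
  · intro γ hγ
    left
    unfold initMark
    rw [if_neg]
    intro hMD
    exact hMD.2.2 hγ
  · intro ξ hξ; simp at hξ
  · intro b c hbc h
    rcases hinit (b, c) with h' | h' <;> rw [h'] at h <;> simp at h
  · intro ξ hξ; simp at hξ

set_option maxHeartbeats 1000000 in
/-- The inductive step: processing one more place preserves the invariant. -/
lemma invStep {n : ℕ} {D : Set (ℕ × ℕ)} (hD : IsBasic n D) {s : MState}
    {X : List (ℕ × ℕ)} {lo : ℕ} {q : ℕ × ℕ} {Q : List (ℕ × ℕ)}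
    (hq : IsPosRoot n q) (hlo : lo ≤ q.2)
    (hQ : ∀ r ∈ Q, SuccG q r) (hQpos : ∀ r ∈ Q, IsPosRoot n r)
    (inv : ScanInv n D s X lo (q :: Q)) :
    ScanInv n D (proc s q) (if s q = none then X ++ [q] else X) q.2 Q := by
  obtain ⟨a, c⟩ := q
  have hc1 : 1 ≤ c := hq.1
  have hca : c < a := hq.2.1
  have han : a ≤ n := hq.2.2
  replace hlo : lo ≤ c := hlo
  by_cases hsq : s (a, c) = none
  case neg =>
    rw [if_neg hsq]
    have hproc : proc s (a, c) = s := if_neg hsq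
    rw [hproc]
    refine ⟨?_, inv.i2, ?_, ?_, ?_, ?_, inv.i7, inv.i8, inv.i9, inv.i10, inv.i11, inv.i12, ?_⟩
    · intro γ hγ hmem
      by_cases hγq : γ = (a, c)
      · subst hγq; exact hsq
      · refine inv.i1 γ hγ ?_
        intro h
        rcases List.mem_cons.mp h with h | h
        · exact hγq h
        · exact hmem h
    · intro γ hγ hge
      exact inv.i3 γ hγ (le_trans hlo hge)
    · intro x hx h
      exact inv.i4 x (by omega) h
    · intro x hx ξ hξ he
      exact le_trans (inv.i5 x (by omega) ξ hξ he) hlo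
    · rcases eq_or_lt_of_le hlo with heq | hlt
      · rcases inv.i6 with h | h
        · exact Or.inl (heq ▸ h)
        · exact Or.inr fun r hr hrc => h r (List.mem_cons_of_mem _ hr) (by rw [hrc, ← heq])
      · left
        by_cases hex : ∃ ξ ∈ X, ξ.1 = c
        · obtain ⟨ξ, h1, h2⟩ := hex
          exact le_trans (inv.i5 c hlt ξ h1 h2) (le_of_lt hlt)
        · push_neg at hex
          exact le_of_eq (inv.i4 c hlt hex)
    · intro ξ hξ
      exact le_trans (inv.i13 ξ hξ) hlo
  case pos =>
  rw [if_pos hsq]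
  have hproc : proc s (a, c) = markStep s (a, c) := if_pos hsq
  rw [hproc]
  set w := permOf X with hwdef
  have hwX : permOf (X ++ [(a, c)]) = w * Equiv.swap a c := permOf_append X (a, c)
  have hwa' : permOf (X ++ [(a, c)]) a = w c := by
    rw [hwX, Equiv.Perm.mul_apply, Equiv.swap_apply_left]
  have hwc' : permOf (X ++ [(a, c)]) c = w a := by
    rw [hwX, Equiv.Perm.mul_apply, Equiv.swap_apply_right]
  have hwo' : ∀ x, x ≠ a → x ≠ c → permOf (X ++ [(a, c)]) x = w x := by
    intro x h1 h2
    rw [hwX, Equiv.Perm.mul_apply, Equiv.swap_apply_of_ne_of_ne h1 h2]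
  have hF1 : w c < w a := (inv.i3 (a, c) hq hlo).mp (Or.inl hsq)
  have hmarked : ∀ γ : ℕ × ℕ, IsPosRoot n γ → γ ≠ (a, c) → ¬ SuccG (a, c) γ →
      s γ ≠ none := by
    intro γ hp hne hns
    refine inv.i1 γ hp ?_
    intro hmem
    rcases List.mem_cons.mp hmem with h | h
    · exact hne h
    · exact hns (hQ γ h)
  have hnotinX : (a, c) ∉ X := by
    intro h
    have := (inv.i9 (a, c)).mpr h
    rw [hsq] at this
    cases this
  have hqMD : (a, c) ∉ MD n D := by
    intro h
    have := (inv.i2 (a, c)).mpr h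
    rw [hsq] at this
    cases this
  have hYcol : ∀ b, a < b → (b, c) ∈ D → False := by
    intro b hab hbD
    have hbpos := hD.1 _ hbD
    have hmk : s (b, c) ≠ none := by
      refine hmarked (b, c) hbpos (by simp; omega) ?_
      simp only [SuccG]
      push_neg
      constructor <;> omega
    rcases inv.i10 _ hbD with h | h
    · exact hmk h
    · exact inv.i12 b c hbD h a hca hab hsq
  have hY : (a, c) ∈ D ∨ ∃ k, k < c ∧ (a, k) ∈ D := by
    by_cases hD' : (a, c) ∈ D
    · exact Or.inl hD'
    right
    have hsing : IsSingular n D (a, c) := by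
      by_contra hns
      exact hqMD ⟨hq, hns, hD'⟩
    obtain ⟨-, β, γ', hβ, hsum, hγ'D⟩ := hsing
    rcases hsum with ⟨h1, h2⟩ | ⟨h1, h2⟩
    · subst h2
      refine ⟨β.2, ?_, hγ'D⟩
      have h3 := hβ.2.1
      replace h1 : c = β.1 := h1
      omega
    · subst h2
      exfalso
      have h3 := hβ.2.1
      replace h1 : β.2 = a := h1
      exact hYcol β.1 (by omega) hγ'D
  have hrowXi_of_k : (∃ k, k < c ∧ (a, k) ∈ D) → ∃ ξ ∈ X, ξ.1 = a := by
    rintro ⟨k, hk, hkD⟩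
    have hkpos := hD.1 _ hkD
    have hmk := hmarked (a, k) hkpos (by simp; omega)
      (by simp only [SuccG]; push_neg; constructor <;> omega)
    rcases inv.i10 _ hkD with h | h
    · exact absurd h hmk
    · exact ⟨(a, k), (inv.i9 _).mp h, rfl⟩
  have hwa_lo : (∃ ξ ∈ X, ξ.1 = a) → w a ≤ lo := by
    rintro ⟨ξ, h1, h2⟩
    exact inv.i5 a (by omega) ξ h1 h2
  have hqD_norow : (a, c) ∈ D → ∀ ξ ∈ X, ξ.1 ≠ a := by
    intro hqD ξ hξ he
    obtain ⟨d, hdD, hdle⟩ := inv.i11 ξ hξ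
    rw [he] at hdD
    have h13 : ξ.2 ≤ lo := inv.i13 ξ hξ
    have hdc : d = c := congrArg Prod.snd (hD.2.1 _ hdD _ hqD rfl)
    have hxc : ξ.2 = c := by omega
    have hx : ξ = (a, c) := Prod.ext_iff.mpr ⟨he, hxc⟩
    exact hnotinX (hx ▸ hξ)
  have hwa_a : (a, c) ∈ D → w a = a := fun h => inv.i4 a (by omega) (hqD_norow h)
  have hwa_le : w a ≤ c ∨ ((a, c) ∈ D ∧ w a = a) := by
    rcases hY with h | h
    · exact Or.inr ⟨h, hwa_a h⟩
    · exact Or.inl (le_trans (hwa_lo (hrowXi_of_k h)) hlo)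
  have hF2 : w c ≤ c := by
    rcases eq_or_lt_of_le hlo with heq | hlt
    · rcases inv.i6 with h | h
      · exact heq ▸ h
      · exact absurd hsq (h (a, c) List.mem_cons_self heq.symm)
    · by_cases hex : ∃ ξ ∈ X, ξ.1 = c
      · obtain ⟨ξ, h1, h2⟩ := hex
        exact le_trans (inv.i5 c hlt ξ h1 h2) (le_of_lt hlt)
      · push_neg at hex
        exact le_of_eq (inv.i4 c hlt hex)
  have hnorow : ∀ m, c < m →
      (∀ d, d ≤ c → (m, d) ∈ D → d = c ∧ s (m, c) = none) → ∀ ξ ∈ X, ξ.1 ≠ m := by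
    intro m hcm hcond ξ hξ he
    obtain ⟨d, hdD, hdle⟩ := inv.i11 ξ hξ
    rw [he] at hdD
    have h13 : ξ.2 ≤ lo := inv.i13 ξ hξ
    obtain ⟨hdc, hnone⟩ := hcond d (by omega) hdD
    have hxc : ξ.2 = c := by omega
    have hx : ξ = (m, c) := Prod.ext_iff.mpr ⟨he, hxc⟩
    have hot := (inv.i9 (m, c)).mpr (hx ▸ hξ)
    rw [hnone] at hot
    cases hot
  have hnotplus : ∀ γ : ℕ × ℕ, lo < γ.2 → s γ ≠ some Mark.plus := by
    intro γ hγ h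
    obtain ⟨ξ, hξ, he, -⟩ := inv.i8 γ h
    have := inv.i13 ξ hξ
    omega
  have hnototimes : ∀ γ : ℕ × ℕ, lo < γ.2 → s γ ≠ some Mark.otimes := by
    intro γ hγ h
    have := inv.i13 γ ((inv.i9 γ).mp h)
    omega
  have hamMD : ∀ m, c < m → (a, m) ∉ MD n D := by
    intro m hcm hMD
    rw [mem_MD_iff hD] at hMD
    obtain ⟨-, hrow, -, -⟩ := hMD
    rcases hY with h | ⟨k, hk, hkD⟩
    · exact hrow c hcm h
    · exact hrow k (by omega) hkD
  have hneg_am : ∀ m, c < m → s (a, m) ≠ none → s (a, m) = some Mark.minus := by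
    intro m h1 h3
    rcases hv : s (a, m) with _ | v
    · exact absurd hv h3
    cases v
    · exact absurd hv (hnototimes (a, m) (by simp; omega))
    · exact absurd hv (hnotplus (a, m) (by simp; omega))
    · rfl
    · exact absurd ((inv.i2 _).mp hv) (hamMD m h1)
  have hnorow_m : ∀ m, c < m → (m, c) ∈ MD n D → ∀ ξ ∈ X, ξ.1 ≠ m := by
    intro m hcm hMD
    refine hnorow m hcm ?_
    intro d hd hdD
    rw [mem_MD_iff hD] at hMD
    obtain ⟨-, hrow, -, hnD⟩ := hMD
    rcases eq_or_lt_of_le hd with h | h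
    · exact absurd (h ▸ hdD) hnD
    · exact absurd hdD (hrow d h)
  have hDcol : (a, c) ∈ D → ∀ m, c < m → m < a → markStep s (a, c) (m, c) ≠ none := by
    intro hqD m h1 h2
    rw [show ((m, c) : ℕ × ℕ) = (m, (a, c).2) from rfl,
      markStep_col (show (a, c).2 < m from h1) (show m < (a, c).1 from h2)]
    by_cases hmc : s (m, c) = none
    · have ham : s (a, m) = none := by
        rcases hv : s (a, m) with _ | v
        · rfl
        cases v
        · exact absurd hv (hnototimes (a, m) (by simp; omega))
        · exact absurd hv (hnotplus (a, m) (by simp; omega))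
        · obtain ⟨ξ, hξ, he, -⟩ := inv.i7 (a, m) hv
          exact absurd he (hqD_norow hqD ξ hξ)
        · exact absurd ((inv.i2 _).mp hv) (hamMD m h1)
      rw [if_pos ⟨hmc, ham⟩]
      simp
    · rw [if_neg (fun h => hmc h.1)]
      exact hmc
  have hposval : ∀ γ : ℕ × ℕ, IsPosRoot n γ → lo ≤ γ.2 →
      (s γ = none ∨ s γ = some Mark.bullet) → w γ.2 < w γ.1 :=
    fun γ hp hge h => (inv.i3 γ hp hge).mp h
  have hnegval : ∀ γ : ℕ × ℕ, IsPosRoot n γ → lo ≤ γ.2 → s γ ≠ none →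
      s γ ≠ some Mark.bullet → w γ.1 < w γ.2 := by
    intro γ hp hge h1 h2
    have hiff := inv.i3 γ hp hge
    have hnp : ¬ (w γ.2 < w γ.1) := by
      intro hp'
      rcases hiff.mpr hp' with h | h
      · exact h1 h
      · exact h2 h
    refine perm_lt_of_not_lt w ?_ hnp
    obtain ⟨e1, e2, e3⟩ := hp
    omega
  have hmcol : ∀ m, c < m → m < a → markStep s (a, c) (m, c) =
      if s (m, c) = none ∧ s (a, m) = none then some Mark.plus else s (m, c) :=
    fun m h1 h2 => markStep_col (ξ := (a, c)) h1 h2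
  have hmrow : ∀ m, c < m → m < a → markStep s (a, c) (a, m) =
      if s (a, m) = none ∧ s (m, c) = none then some Mark.minus else s (a, m) :=
    fun m h1 h2 => markStep_row (ξ := (a, c)) h1 h2
  refine ⟨?_, ?_, ?_, ?_, ?_, ?_, ?_, ?_, ?_, ?_, ?_, ?_, ?_⟩
  · -- i1
    intro γ hγ hmem
    by_cases hγq : γ = (a, c)
    · subst hγq
      rw [markStep_self]
      simp
    · intro h
      refine inv.i1 γ hγ ?_ (markStep_none_imp h)
      intro hm
      rcases List.mem_cons.mp hm with h' | h'
      · exact hγq h'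
      · exact hmem h'
  · -- i2
    intro γ
    constructor
    · intro h
      rcases markStep_cases s (a, c) γ with he | he | he | he
      · rw [he] at h; exact (inv.i2 γ).mp h
      · rw [he, markStep_self] at h; simp at h
      · rw [he.2.2.2.2.2] at h; simp at h
      · rw [he.2.2.2.2.2] at h; simp at h
    · intro h
      have hb := (inv.i2 γ).mpr h
      have hne : γ ≠ (a, c) := by
        intro he; rw [he, hsq] at hb; cases hb
      rw [markStep_of_marked hne (by rw [hb]; simp)]
      exact hb
  · -- i3 (the main sign invariant)
    rintro ⟨x, y⟩ hγp hge
    dsimp only at hge ⊢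
    have hy1 : 1 ≤ y := hγp.1
    have hyx : y < x := hγp.2.1
    have hxn : x ≤ n := hγp.2.2
    by_cases hyc : y = c
    · obtain rfl : c = y := hyc.symm
      by_cases hxa : x = a
      · obtain rfl : a = x := hxa.symm
        rw [markStep_self, hwc', hwa']
        exact iff_of_false (by simp) (by omega)
      by_cases hax : a < x
      · -- place (x, c), x > a : already marked, mark unchanged
        have hmk : s (x, c) ≠ none :=
          hmarked (x, c) hγp (by simp only [ne_eq, Prod.mk.injEq]; omega)
            (by simp only [SuccG]; omega)
        have hs' : markStep s (a, c) (x, c) = s (x, c) := by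
          refine markStep_other (by simp only [ne_eq, Prod.mk.injEq]; omega) ?_ ?_
          · rintro ⟨-, -, h⟩; dsimp only at h; omega
          · rintro ⟨h, -, -⟩; dsimp only at h; omega
        rw [hs', hwc', hwo' x (by omega) (by omega)]
        rcases hv : s (x, c) with _ | v
        · exact absurd hv hmk
        cases v with
        | bullet =>
          have hMD := (inv.i2 _).mp hv
          have hwx : w x = x := inv.i4 x (by omega) (hnorow_m x (by omega) hMD)
          have hwalt : w a < w x := by
            rw [hwx]
            rcases hwa_le with h | ⟨hD', he⟩ <;> omega
          exact iff_of_true (Or.inr rfl) hwalt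
        | otimes =>
          have hneg : w x < w c := hnegval (x, c) hγp hlo (by rw [hv]; simp) (by rw [hv]; simp)
          exact iff_of_false (by simp) (by omega)
        | plus =>
          have hneg : w x < w c := hnegval (x, c) hγp hlo (by rw [hv]; simp) (by rw [hv]; simp)
          exact iff_of_false (by simp) (by omega)
        | minus =>
          have hneg : w x < w c := hnegval (x, c) hγp hlo (by rw [hv]; simp) (by rw [hv]; simp)
          exact iff_of_false (by simp) (by omega)
      · -- place (x, c), c < x < a
        have hax' : x < a := by omega
        have hcm : c < x := by omega
        rw [hmcol x hcm hax', hwc', hwo' x (by omega) (by omega)]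
        by_cases hmc : s (x, c) = none
        · by_cases ham : s (a, x) = none
          · rw [if_pos ⟨hmc, ham⟩]
            have hpos : w x < w a :=
              hposval (a, x) ⟨by omega, hax', han⟩ (by omega) (Or.inl ham)
            exact iff_of_false (by simp) (by omega)
          · rw [if_neg (fun h => ham h.2), hmc]
            have hminus := hneg_am x hcm ham
            have hneg : w a < w x :=
              hnegval (a, x) ⟨by omega, hax', han⟩ (by omega) ham (by rw [hminus]; simp)
            exact iff_of_true (Or.inl rfl) hneg
        · rw [if_neg (fun h => hmc h.1)]
          rcases hv : s (x, c) with _ | v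
          · exact absurd hv hmc
          cases v with
          | bullet =>
            have hMD := (inv.i2 _).mp hv
            have hwx : w x = x := inv.i4 x (by omega) (hnorow_m x hcm hMD)
            have hwac : w a ≤ c := by
              rcases hY with h | h
              · exfalso
                rw [mem_MD_iff hD] at hMD
                exact hMD.2.2.1 a hax' h
              · exact le_trans (hwa_lo (hrowXi_of_k h)) hlo
            exact iff_of_true (Or.inr rfl) (by rw [hwx]; omega)
          | otimes =>
            have hneg : w x < w c := hnegval (x, c) hγp hlo (by rw [hv]; simp) (by rw [hv]; simp)
            exact iff_of_false (by simp) (by omega)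
          | plus =>
            have hneg : w x < w c := hnegval (x, c) hγp hlo (by rw [hv]; simp) (by rw [hv]; simp)
            exact iff_of_false (by simp) (by omega)
          | minus =>
            have hneg : w x < w c := hnegval (x, c) hγp hlo (by rw [hv]; simp) (by rw [hv]; simp)
            exact iff_of_false (by simp) (by omega)
    · -- y ≠ c, so c < y
      have hyc' : c < y := by omega
      by_cases hxa : x = a
      · obtain rfl : a = x := hxa.symm
        -- place (a, y), c < y < a
        have hya : y < a := hyx
        rw [hmrow y hyc' hya, hwa', hwo' y (by omega) (by omega)]
        by_cases ham : s (a, y) = none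
        · by_cases hmc : s (y, c) = none
          · rw [if_pos ⟨ham, hmc⟩]
            have hpos : w c < w y := hposval (y, c) ⟨hc1, hyc', by omega⟩ hlo (Or.inl hmc)
            exact iff_of_false (by simp) (by omega)
          · rw [if_neg (fun h => hmc h.2), ham]
            rcases hv : s (y, c) with _ | v
            · exact absurd hv hmc
            cases v with
            | bullet =>
              exfalso
              have hMD := (inv.i2 _).mp hv
              have hwy : w y = y := inv.i4 y (by omega) (hnorow_m y hyc' hMD)
              have hwac : w a ≤ c := by
                rcases hY with h | h
                · exfalso
                  rw [mem_MD_iff hD] at hMD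
                  exact hMD.2.2.1 a hya h
                · exact le_trans (hwa_lo (hrowXi_of_k h)) hlo
              have hpos : w y < w a :=
                hposval (a, y) ⟨by omega, hya, han⟩ (by omega) (Or.inl ham)
              omega
            | otimes =>
              have hneg : w y < w c :=
                hnegval (y, c) ⟨hc1, hyc', by omega⟩ hlo (by rw [hv]; simp) (by rw [hv]; simp)
              exact iff_of_true (Or.inl rfl) hneg
            | plus =>
              have hneg : w y < w c :=
                hnegval (y, c) ⟨hc1, hyc', by omega⟩ hlo (by rw [hv]; simp) (by rw [hv]; simp)
              exact iff_of_true (Or.inl rfl) hneg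
            | minus =>
              have hneg : w y < w c :=
                hnegval (y, c) ⟨hc1, hyc', by omega⟩ hlo (by rw [hv]; simp) (by rw [hv]; simp)
              exact iff_of_true (Or.inl rfl) hneg
        · rw [if_neg (fun h => ham h.1)]
          have hminus := hneg_am y hyc' ham
          rw [hminus]
          have hneg : w a < w y :=
            hnegval (a, y) ⟨by omega, hya, han⟩ (by omega) ham (by rw [hminus]; simp)
          exact iff_of_false (by simp) (by omega)
      · by_cases hya : y = a
        · obtain rfl : a = y := hya.symm
          -- place (x, a), x > a
          have hs' : markStep s (a, c) (x, a) = s (x, a) := by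
            refine markStep_other (by simp only [ne_eq, Prod.mk.injEq]; omega) ?_ ?_
            · rintro ⟨h, -, -⟩; dsimp only at h; omega
            · rintro ⟨h, -, -⟩; dsimp only at h; omega
          rw [hs', hwa', hwo' x (by omega) (by omega)]
          have hiff := inv.i3 (x, a) ⟨by omega, hyx, hxn⟩ (by omega)
          dsimp only at hiff
          rw [← hwdef] at hiff
          rw [hiff]
          constructor
          · intro h; omega
          · intro h
            by_contra hcon
            have hxa' : w x < w a := perm_lt_of_not_lt w (by omega) hcon
            have hmin : s (x, a) = some Mark.minus := by
              rcases hv : s (x, a) with _ | v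
              · rw [hv] at hiff
                exact absurd (hiff.mp (Or.inl rfl)) hcon
              cases v with
              | otimes => exact absurd hv (hnototimes (x, a) (by omega))
              | plus => exact absurd hv (hnotplus (x, a) (by omega))
              | minus => rfl
              | bullet =>
                rw [hv] at hiff
                exact absurd (hiff.mp (Or.inr rfl)) hcon
            obtain ⟨ξ, hξ, hrow1, -⟩ := inv.i7 (x, a) hmin
            obtain ⟨d, hdD, hdle⟩ := inv.i11 ξ hξ
            rw [hrow1] at hdD
            have h13 := inv.i13 ξ hξ
            have hmk : s (x, c) ≠ none :=
              hmarked (x, c) ⟨hc1, by omega, hxn⟩ (by simp only [ne_eq, Prod.mk.injEq]; omega)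
                (by simp only [SuccG]; omega)
            have hnb : s (x, c) ≠ some Mark.bullet := by
              intro hv
              have hMD := (inv.i2 _).mp hv
              rw [mem_MD_iff hD] at hMD
              dsimp only at hdD
              rcases eq_or_lt_of_le (show d ≤ c by omega) with h' | h'
              · exact hMD.2.2.2 (h' ▸ hdD)
              · exact hMD.2.1 d h' hdD
            have hnegx : w x < w c := hnegval (x, c) ⟨hc1, by omega, hxn⟩ hlo hmk hnb
            omega
        · -- generic place (x, y), x ∉ {a, c}, y ∉ {a, c}
          have hxc2 : x ≠ c := by omega
          have hs' : markStep s (a, c) (x, y) = s (x, y) := by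
            refine markStep_other ?_ ?_ ?_
            · intro he
              exact hxa (congrArg Prod.fst he)
            · rintro ⟨h, -, -⟩; dsimp only at h; omega
            · rintro ⟨h, -, -⟩; dsimp only at h; exact hxa h
          rw [hs', hwo' x hxa hxc2, hwo' y hya (by omega)]
          exact inv.i3 (x, y) hγp (by omega)
  · -- i4
    intro x hx h
    replace hx : c < x := hx
    have hxa : x ≠ a := fun he => (h (a, c) (by simp)) he.symm
    rw [hwo' x hxa (by omega)]
    exact inv.i4 x (by omega) (fun ξ hξ => h ξ (List.mem_append_left _ hξ))
  · -- i5
    intro x hx ξ hξ he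
    replace hx : c < x := hx
    show permOf (X ++ [(a, c)]) x ≤ c
    rcases List.mem_append.mp hξ with h | h
    · by_cases hxa : x = a
      · obtain rfl : a = x := hxa.symm
        rw [hwa']
        exact hF2
      · rw [hwo' x hxa (by omega)]
        exact le_trans (inv.i5 x (by omega) ξ h he) hlo
    · simp only [List.mem_singleton] at h
      subst h
      obtain rfl : a = x := he
      rw [hwa']
      exact hF2
  · -- i6
    by_cases hex : ∃ ξ ∈ X, ξ.1 = a
    · left
      show permOf (X ++ [(a, c)]) c ≤ c
      rw [hwc']
      exact le_trans (hwa_lo hex) hlo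
    · rcases hY with hqD | hk
      · right
        intro r hr hrc
        have hrpos := hQpos r hr
        have hsucc := hQ r hr
        replace hrc : r.2 = c := hrc
        have hr1a : r.1 < a := by
          rcases hsucc with h | ⟨h1, h2⟩
          · dsimp only at h; omega
          · exact h2
        have hcr1 : c < r.1 := by have := hrpos.2.1; omega
        have hre : r = (r.1, c) := Prod.ext_iff.mpr ⟨rfl, hrc⟩
        rw [hre]
        exact hDcol hqD r.1 hcr1 hr1a
      · exact absurd (hrowXi_of_k hk) hex
  · -- i7
    intro γ h
    rcases markStep_cases s (a, c) γ with he | he | he | he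
    · rw [he] at h
      obtain ⟨ξ, hξ, h1, h2⟩ := inv.i7 γ h
      exact ⟨ξ, List.mem_append_left _ hξ, h1, h2⟩
    · rw [he, markStep_self] at h; simp at h
    · rw [he.2.2.2.2.2] at h; simp at h
    · exact ⟨(a, c), List.mem_append_right _ (by simp), he.1.symm, he.2.1⟩
  · -- i8
    intro γ h
    rcases markStep_cases s (a, c) γ with he | he | he | he
    · rw [he] at h
      obtain ⟨ξ, hξ, h1, h2⟩ := inv.i8 γ h
      exact ⟨ξ, List.mem_append_left _ hξ, h1, h2⟩
    · rw [he, markStep_self] at h; simp at h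
    · exact ⟨(a, c), List.mem_append_right _ (by simp), he.1.symm, he.2.2.1⟩
    · rw [he.2.2.2.2.2] at h; simp at h
  · -- i9
    intro γ
    constructor
    · intro h
      rcases markStep_cases s (a, c) γ with he | he | he | he
      · rw [he] at h
        exact List.mem_append_left _ ((inv.i9 γ).mp h)
      · exact List.mem_append_right _ (by simp [he])
      · rw [he.2.2.2.2.2] at h; simp at h
      · rw [he.2.2.2.2.2] at h; simp at h
    · intro h
      rcases List.mem_append.mp h with h | h
      · have ho := (inv.i9 γ).mpr h
        have hne : γ ≠ (a, c) := by intro he; rw [he, hsq] at ho; cases ho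
        rw [markStep_of_marked hne (by rw [ho]; simp)]
        exact ho
      · simp only [List.mem_singleton] at h
        subst h
        exact markStep_self s (a, c)
  · -- i10
    intro γ hγD
    rcases markStep_cases s (a, c) γ with he | he | he | he
    · rw [he]; exact inv.i10 γ hγD
    · rw [he, markStep_self]; exact Or.inr rfl
    · exfalso
      obtain ⟨he1, he2, he3, he4, he5, -⟩ := he
      dsimp only at he1 he2 he3
      have hγeq : γ = (γ.1, c) := Prod.ext_iff.mpr ⟨rfl, he1⟩
      have hγD' : (γ.1, c) ∈ D := by rw [← hγeq]; exact hγD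
      rcases hY with h | h
      · have hcc := hD.2.2 _ hγD' _ h rfl
        have h1 : γ.1 = a := congrArg Prod.fst hcc
        omega
      · have hwa2 : w a ≤ c := le_trans (hwa_lo (hrowXi_of_k h)) hlo
        have hnr : ∀ ξ ∈ X, ξ.1 ≠ γ.1 := by
          refine hnorow γ.1 he2 ?_
          intro d hd hdD
          have hdd : (γ.1, d) = (γ.1, c) := hD.2.1 _ hdD _ hγD' rfl
          have hdc : d = c := congrArg Prod.snd hdd
          refine ⟨hdc, ?_⟩
          rw [← hγeq]
          exact he4
        have hw1 : w γ.1 = γ.1 := inv.i4 γ.1 (by omega) hnr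
        have hpos := hposval (a, γ.1) ⟨by omega, he3, han⟩ (by omega) (Or.inl he5)
        dsimp only at hpos
        omega
    · exfalso
      obtain ⟨he1, he2, he3, -, -, -⟩ := he
      dsimp only at he1 he2 he3
      have hγeq : γ = (a, γ.2) := Prod.ext_iff.mpr ⟨he1, rfl⟩
      have hγD' : (a, γ.2) ∈ D := by rw [← hγeq]; exact hγD
      rcases hY with h | h
      · have hcc := hD.2.1 _ hγD' _ h rfl
        have h2 : γ.2 = c := congrArg Prod.snd hcc
        omega
      · obtain ⟨k, hk, hkD⟩ := h
        have hcc := hD.2.1 _ hγD' _ hkD rfl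
        have h2 : γ.2 = k := congrArg Prod.snd hcc
        omega
  · -- i11
    intro ξ hξ
    rcases List.mem_append.mp hξ with h | h
    · exact inv.i11 ξ h
    · simp only [List.mem_singleton] at h
      subst h
      rcases hY with h | ⟨k, hk, hkD⟩
      · exact ⟨c, h, le_refl _⟩
      · exact ⟨k, hkD, le_of_lt hk⟩
  · -- i12
    intro b c' hbD hot m h1 h2
    by_cases hold : s (b, c') = some Mark.otimes
    · intro hnone
      exact inv.i12 b c' hbD hold m h1 h2 (markStep_none_imp hnone)
    · have hbq : ((b, c') : ℕ × ℕ) = (a, c) := by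
        rcases markStep_cases s (a, c) (b, c') with he | he | he | he
        · rw [he] at hot; exact absurd hot hold
        · exact he
        · rw [he.2.2.2.2.2] at hot; simp at hot
        · rw [he.2.2.2.2.2] at hot; simp at hot
      have hb : b = a := congrArg Prod.fst hbq
      have hc : c' = c := congrArg Prod.snd hbq
      subst hb
      subst hc
      exact hDcol hbD m h1 h2
  · -- i13
    intro ξ hξ
    rcases List.mem_append.mp hξ with h | h
    · exact le_trans (inv.i13 ξ h) hlo
    · simp only [List.mem_singleton] at h
      subst h
      exact le_refl _

/-! ### Iterating the invariant over the root list -/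

lemma colLast_append (P : List (ℕ × ℕ)) (q : ℕ × ℕ) : colLast (P ++ [q]) = q.2 := by
  simp [colLast, List.getLast?_append]

lemma xis_append (s : MState) (P : List (ℕ × ℕ)) (q : ℕ × ℕ) :
    (diagRun s (P ++ [q])).map Prod.fst =
      (diagRun s P).map Prod.fst ++ (if procList s P q = none then [q] else []) := by
  rw [diagRun_append, List.map_append]
  congr 1
  by_cases h : procList s P q = none
  · rw [if_pos h, diagRun, if_pos h]
    simp [diagRun]
  · rw [if_neg h, diagRun, if_neg h]
    simp [diagRun]

lemma invAll {n : ℕ} {D : Set (ℕ × ℕ)} (hD : IsBasic n D) :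
    ∀ (P Q : List (ℕ × ℕ)), rootList n = P ++ Q →
      ScanInv n D (procList (initMark n D) P) ((diagRun (initMark n D) P).map Prod.fst)
        (colLast P) Q := by
  intro P
  induction P using List.reverseRecOn with
  | nil =>
    intro Q hQ
    have : Q = rootList n := by simpa using hQ.symm
    subst this
    exact invBase n D
  | append_singleton P q ih =>
    intro Q hQ
    rw [List.append_assoc, List.singleton_append] at hQ
    have inv := ih (q :: Q) hQ
    have hpw := pairwise_rootList n
    rw [hQ, List.pairwise_append] at hpw
    obtain ⟨hpwP, hpwQ, hPQ⟩ := hpw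
    have hqmem : q ∈ rootList n := by rw [hQ]; simp
    have hqpos : IsPosRoot n q := mem_rootList.mp hqmem
    have hlo : colLast P ≤ q.2 := by
      rcases List.eq_nil_or_concat P with rfl | ⟨P', p, rfl⟩
      · simpa [colLast] using hqpos.1
      · rw [List.concat_eq_append, colLast_append]
        exact succG_col (hPQ p (by simp) q (by simp))
    have hQ' : ∀ r ∈ Q, SuccG q r := (List.pairwise_cons.mp hpwQ).1
    have hQpos : ∀ r ∈ Q, IsPosRoot n r := by
      intro r hr
      refine mem_rootList.mp ?_
      rw [hQ]
      simp [hr]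
    have step := invStep hD hqpos hlo hQ' hQpos inv
    rw [procList_append, xis_append, colLast_append]
    by_cases hc : procList (initMark n D) P q = none
    · rw [if_pos hc]
      rw [if_pos hc] at step
      simpa [procList] using step
    · rw [if_neg hc]
      rw [if_neg hc] at step
      simpa [procList] using step

/-! ### Locating step `i` of the run inside the scan -/

lemma run_decomp (d : (ℕ × ℕ) × MState) :
    ∀ (L : List (ℕ × ℕ)) (s : MState) (j : ℕ), j < (diagRun s L).length →
    ∃ P ξ Q, L = P ++ ξ :: Q ∧ procList s P ξ = none ∧
      (diagRun s L).getD j d = (ξ, markStep (procList s P) ξ) ∧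
      (diagRun s (P ++ [ξ])).length = j + 1 := by
  intro L
  induction L with
  | nil => intro s j h; simp [diagRun] at h
  | cons q L ih =>
    intro s j h
    by_cases hs : s q = none
    · rw [diagRun, if_pos hs] at h ⊢
      match j with
      | 0 =>
        refine ⟨[], q, L, rfl, hs, ?_, ?_⟩
        · simp [procList]
        · rw [show ([] : List (ℕ × ℕ)) ++ [q] = [q] from rfl, diagRun, if_pos hs]
          simp [diagRun]
      | (j' + 1) =>
        simp only [List.length_cons, Nat.add_lt_add_iff_right] at h
        obtain ⟨P, ξ, Q, h1, h2, h3, h4⟩ := ih (markStep s q) j' h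
        refine ⟨q :: P, ξ, Q, by rw [h1, List.cons_append], ?_, ?_, ?_⟩
        · rwa [show procList s (q :: P) = procList (markStep s q) P by
            simp [procList, proc, if_pos hs]]
        · simpa [show procList s (q :: P) = procList (markStep s q) P by
            simp [procList, proc, if_pos hs]] using h3
        · rw [List.cons_append, diagRun, if_pos hs]
          simpa using h4
    · rw [diagRun, if_neg hs] at h ⊢
      obtain ⟨P, ξ, Q, h1, h2, h3, h4⟩ := ih s j h
      refine ⟨q :: P, ξ, Q, by rw [h1, List.cons_append], ?_, ?_, ?_⟩
      · rwa [show procList s (q :: P) = procList s P by simp [procList, proc, if_neg hs]]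
      · rwa [show procList s (q :: P) = procList s P by simp [procList, proc, if_neg hs]]
      · rw [List.cons_append, diagRun, if_neg hs]
        exact h4

lemma wStep_succ (n : ℕ) (D : Set (ℕ × ℕ)) (i : ℕ) :
    wStep n D (i + 1) = wStep n D i *
      Equiv.swap (xiRoot n D (i + 1)).1 (xiRoot n D (i + 1)).2 := by
  rw [wStep, wStep, List.range_succ, List.foldl_append]
  rfl

lemma wStep_eq (n : ℕ) (D : Set (ℕ × ℕ)) :
    ∀ i, i ≤ numSteps n D →
      wStep n D i = permOf (((diagSeq n D).take i).map Prod.fst) := by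
  intro i
  induction i with
  | zero => intro _; rfl
  | succ i ih =>
    intro h
    have hi : i < (diagSeq n D).length := h
    rw [wStep_succ, ih (Nat.le_of_lt hi)]
    rw [List.take_succ, List.getElem?_eq_getElem hi]
    simp only [Option.toList_some, List.map_append, List.map_cons, List.map_nil]
    rw [permOf_append]
    have hxi : xiRoot n D (i + 1) = ((diagSeq n D)[i]).1 := by
      rw [xiRoot, Nat.add_sub_cancel, List.getD_eq_getElem _ _ hi]
    rw [hxi]

end Stmt10Aux

/-- let `ξ_i ∈ C(D)` with `col ξ_i = t` and let `γ ∈ Δ⁺` with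
`col γ ≥ t`. After step `i`, the place `γ` is unmarked or marked `•` iff
`w_i(γ) > 0`; equivalently, `γ` is marked `⊗`, `+` or `−` iff `w_i(γ) < 0`. -/
theorem stmt10 (n : ℕ) (hn : 2 ≤ n) (D : Set (ℕ × ℕ)) (hD : IsBasic n D)
    (i : ℕ) (hi1 : 1 ≤ i) (hic : i ≤ numSteps n D)
    (γ : ℕ × ℕ) (hγ : IsPosRoot n γ) (ht : (xiRoot n D i).2 ≤ γ.2) :
    ((stateAfter n D i γ = none ∨ stateAfter n D i γ = some Mark.bullet) ↔
      PosUnder (wStep n D i) γ) ∧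
    ((stateAfter n D i γ = some Mark.otimes ∨ stateAfter n D i γ = some Mark.plus ∨
        stateAfter n D i γ = some Mark.minus) ↔
      ¬ PosUnder (wStep n D i) γ) := by
  obtain ⟨j, rfl⟩ : ∃ j, i = j + 1 := ⟨i - 1, by omega⟩
  have hj : j < (diagSeq n D).length := by
    rw [numSteps] at hic
    omega
  obtain ⟨P, ξ, Q, hL, hnone, hgetD, hlen⟩ :=
    run_decomp ((0, 0), initMark n D) (rootList n) (initMark n D) j hj
  have hsA : stateAfter n D (j + 1) = markStep (procList (initMark n D) P) ξ := by
    show ((diagSeq n D).getD j ((0, 0), initMark n D)).2 = _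
    rw [diagSeq, hgetD]
  have hxi : xiRoot n D (j + 1) = ξ := by
    show ((diagSeq n D).getD (j + 1 - 1) ((0, 0), initMark n D)).1 = ξ
    rw [Nat.add_sub_cancel, diagSeq, hgetD]
  have hP1 : procList (initMark n D) (P ++ [ξ]) = markStep (procList (initMark n D) P) ξ := by
    rw [procList_append]
    show proc (List.foldl proc (initMark n D) P) ξ = _
    have hnone' : List.foldl proc (initMark n D) P ξ = none := hnone
    rw [proc, if_pos hnone']
    rfl
  have hsplit : diagSeq n D = diagRun (initMark n D) (P ++ [ξ]) ++
      diagRun (procList (initMark n D) (P ++ [ξ])) Q := by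
    rw [diagSeq, hL, show P ++ ξ :: Q = (P ++ [ξ]) ++ Q by simp, diagRun_append]
  have htake : (diagSeq n D).take (j + 1) = diagRun (initMark n D) (P ++ [ξ]) := by
    rw [hsplit, ← hlen, List.take_left]
  have hw : wStep n D (j + 1) = permOf ((diagRun (initMark n D) (P ++ [ξ])).map Prod.fst) := by
    rw [wStep_eq n D (j + 1) hic, htake]
  have inv := invAll hD (P ++ [ξ]) Q (by rw [hL]; simp)
  rw [hP1, colLast_append] at inv
  have h1 : (stateAfter n D (j + 1) γ = none ∨ stateAfter n D (j + 1) γ = some Mark.bullet) ↔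
      PosUnder (wStep n D (j + 1)) γ := by
    rw [hsA, hw]
    exact inv.i3 γ hγ (by rw [hxi] at ht; exact ht)
  refine ⟨h1, ?_⟩
  constructor
  · intro h hpos
    rcases h1.mpr hpos with h' | h' <;>
      rcases h with h | h | h <;> rw [h] at h' <;> simp at h'
  · intro hneg
    rcases hv : stateAfter n D (j + 1) γ with _ | m
    · exact absurd (h1.mp (Or.inl hv)) hneg
    · cases m with
      | otimes => exact Or.inl rfl
      | plus => exact Or.inr (Or.inl rfl)
      | minus => exact Or.inr (Or.inr rfl)
      | bullet => exact absurd (h1.mp (Or.inr hv)) hneg
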